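/- arXiv:math/0209162 — 8 statements merged into one kernel-verified Lean document; each statement's English description precedes it below -/
import Mathlib

section
/- Let φ: A → B and ψ: B → A be group homomorphisms of abelian groups with ψ ∘ φ equal to multiplication by m on A. Suppose B/φ(A), A/ψ(B), ker(φ) ∩ A, and ker(ψ) ∩ B are all finite, as are A[m], A/mA. Then #(A/mA) / #A[m] = (#(B/φ(A)) / #ker(φ)) · (#(A/ψ(B)) / #ker(ψ)). -/
/-!
Write `χ(f) = #coker f / #ker f`. Since `ψ ∘ φ = m`, the cokernel of `ψ ∘ φ` is `A/mA` and its
kernel is `A[m]`, so the claim is `χ(ψ ∘ φ) = χ(φ) χ(ψ)`. For `f : A → B`, `g : B → C`, both sides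
are computed through the subgroup `range f ⊓ ker g` of `B`: `ker (g ∘ f)` is an extension of
`range f ⊓ ker g` by `ker f`, and `range (g ∘ f) = g (range f)` has index
`[C : g B] · [B : range f ⊔ ker g]`, while `[ker g : range f ⊓ ker g] = [range f ⊔ ker g : range f]`.
-/

namespace AddSubgroup

variable {G : Type*} [AddGroup G]

theorem card_inf_mul_relIndex (H K : AddSubgroup G) :
    Nat.card (H ⊓ K : AddSubgroup G) * H.relIndex K = Nat.card K := by
  rw [← card_mul_index (H.addSubgroupOf K), ← addSubgroupOf_map_subtype,
    card_map_of_injective K.subtype_injective]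
  rfl

end AddSubgroup

namespace AddMonoidHom

variable {G G' G'' : Type*} [AddGroup G] [AddGroup G'] [AddGroup G'']

theorem card_comap (f : G →+ G') (L : AddSubgroup G') :
    Nat.card (L.comap f) = Nat.card f.ker * Nat.card (f.range ⊓ L : AddSubgroup G') := by
  rw [← AddSubgroup.card_inf_mul_relIndex f.ker, inf_of_le_left (ker_le_comap f L),
    AddSubgroup.relIndex_ker, AddSubgroup.map_comap_eq]

theorem card_ker_comp (f : G →+ G') (g : G' →+ G'') :
    Nat.card (g.comp f).ker = Nat.card f.ker * Nat.card (f.range ⊓ g.ker : AddSubgroup G') := by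
  rw [← comap_ker, card_comap]

end AddMonoidHom

section

variable {A B C : Type*} [AddCommGroup A] [AddCommGroup B] [AddCommGroup C]

theorem AddMonoidHom.index_range_comp (f : A →+ B) (g : B →+ C) :
    (g.comp f).range.index = (f.range ⊔ g.ker).index * g.range.index := by
  rw [range_comp, AddSubgroup.index_map]

theorem AddMonoidHom.index_range_eq_relIndex_mul (f : A →+ B) (g : B →+ C) :
    f.range.index = f.range.relIndex g.ker * (f.range ⊔ g.ker).index := by
  rw [← AddSubgroup.relIndex_sup_left, AddSubgroup.relIndex_mul_index le_sup_left]

theorem AddMonoidHom.index_range_comp_div_card_ker (f : A →+ B) (g : B →+ C) [Finite g.ker] :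
    ((g.comp f).range.index : ℚ) / Nat.card (g.comp f).ker =
      ((f.range.index : ℚ) / Nat.card f.ker) * ((g.range.index : ℚ) / Nat.card g.ker) := by
  have hker_g := AddSubgroup.card_inf_mul_relIndex f.range g.ker
  have hr : (f.range.relIndex g.ker : ℚ) ≠ 0 := by
    have : Nat.card g.ker ≠ 0 := Nat.card_pos.ne'
    exact_mod_cast (mul_ne_zero_iff.mp (hker_g ▸ this)).2
  rw [f.index_range_comp g, f.index_range_eq_relIndex_mul g, f.card_ker_comp g, ← hker_g,
    div_mul_div_comm, ← mul_div_mul_left _ _ hr]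
  push_cast
  ring

end

theorem stmt_3_general (A B : Type*) [AddCommGroup A] [AddCommGroup B] (m : ℕ)
    (φ : A →+ B) (ψ : B →+ A) (hψφ : ∀ a : A, ψ (φ a) = m • a)
    (mA : AddSubgroup A) (hmA : ∀ a : A, a ∈ mA ↔ ∃ x : A, m • x = a)
    [Finite ψ.ker] :
    (Nat.card (A ⧸ mA) : ℚ) / Nat.card {a : A // m • a = 0} =
      ((Nat.card (B ⧸ φ.range) : ℚ) / Nat.card φ.ker) *
        ((Nat.card (A ⧸ ψ.range) : ℚ) / Nat.card ψ.ker) := by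
  have hrange : (ψ.comp φ).range = mA := by
    ext a
    simp only [AddMonoidHom.mem_range, AddMonoidHom.comp_apply, hψφ, hmA]
  have hker : Nat.card {a : A // m • a = 0} = Nat.card (ψ.comp φ).ker :=
    Nat.card_congr <| Equiv.subtypeEquivRight fun a => by
      rw [AddMonoidHom.mem_ker, AddMonoidHom.comp_apply, hψφ]
  rw [← hrange, hker]
  exact φ.index_range_comp_div_card_ker ψ

/-- For homomorphisms `φ : A → B`, `ψ : B → A` of abelian groups with
`ψ ∘ φ = m` on `A`, and with all kernels and cokernels involved finite,
`#(A/mA) / #A[m] = (#(B/φA) / #ker φ) · (#(A/ψB) / #ker ψ)`. -/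
theorem stmt_3 (A B : Type*) [AddCommGroup A] [AddCommGroup B] (m : ℕ) (hm : 0 < m)
    (φ : A →+ B) (ψ : B →+ A) (hψφ : ∀ a : A, ψ (φ a) = m • a)
    (mA : AddSubgroup A) (hmA : ∀ a : A, a ∈ mA ↔ ∃ x : A, m • x = a)
    [Finite (B ⧸ φ.range)] [Finite (A ⧸ ψ.range)]
    [Finite φ.ker] [Finite ψ.ker]
    [Finite {a : A // m • a = 0}] [Finite (A ⧸ mA)] :
    (Nat.card (A ⧸ mA) : ℚ) / Nat.card {a : A // m • a = 0} =
      ((Nat.card (B ⧸ φ.range) : ℚ) / Nat.card φ.ker) *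
        ((Nat.card (A ⧸ ψ.range) : ℚ) / Nat.card ψ.ker) :=
  stmt_3_general A B m φ ψ hψφ mA hmA
end

section
/- Let A and B be abelian groups, φ: A → B and ψ: B → A homomorphisms with ψ ∘ φ = multiplication by m on A and φ ∘ ψ = multiplication by m on B. Then the sequence 0 → ker φ → A[m] → ker ψ → B/φ(A) → A/mA → A/ψ(B) → 0 is exact, where A[m] → ker ψ is induced by φ and B/φ(A) → A/mA is induced by ψ. -/
/-!
Since `ψ ∘ φ = m`, `A[m]` is `φ⁻¹(ker ψ)` and `mA` is `ψ(φ(A))`. These two identities give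
exactness at `ker ψ` and at `B/φ(A)`. Exactness at the other places is formal.
-/

open QuotientAddGroup

theorem Subtype.injective_of_val_eq {α : Type*} {p q : α → Prop} {i : Subtype p → Subtype q}
    (hi : ∀ x, (i x : α) = x) : Function.Injective i :=
  fun x y hxy => Subtype.ext <| by rw [← hi x, ← hi y, hxy]

section ExactSequence

variable {A B : Type*} [AddCommGroup A] [AddCommGroup B] {φ : A →+ B} {ψ : B →+ A}

theorem exact_ker_inclusion_restrict {S : AddSubgroup A} {T : AddSubgroup B}
    {i : φ.ker → S} (hi : ∀ x, (i x : A) = x) {f : S → T} (hf : ∀ x, (f x : B) = φ x) :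
    Function.Exact i f := by
  intro x
  rw [← ZeroMemClass.coe_eq_zero, hf]
  constructor
  · intro hx
    exact ⟨⟨x, hx⟩, Subtype.ext (hi _)⟩
  · rintro ⟨y, rfl⟩
    rw [hi]
    exact y.2

theorem exact_restrict_mk_range {S : AddSubgroup A} (hS : ∀ a, φ a ∈ ψ.ker → a ∈ S)
    {f : S → ψ.ker} (hf : ∀ x, (f x : B) = φ x)
    {g : ψ.ker → B ⧸ φ.range} (hg : ∀ y, g y = mk (y : B)) :
    Function.Exact f g := by
  intro y
  rw [hg, eq_zero_iff]
  constructor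
  · rintro ⟨a, ha⟩
    have hay : φ a ∈ ψ.ker := ha ▸ y.2
    exact ⟨⟨a, hS a hay⟩, Subtype.ext (by rw [hf, ha])⟩
  · rintro ⟨x, rfl⟩
    exact ⟨x, (hf x).symm⟩

theorem exact_mk_range_map {N : AddSubgroup A} (hN : ∀ a ∈ N, ∃ x, ψ (φ x) = a)
    {g : ψ.ker → B ⧸ φ.range} (hg : ∀ y, g y = mk (y : B))
    {h : B ⧸ φ.range → A ⧸ N} (hh : ∀ b, h (mk b) = mk (ψ b)) :
    Function.Exact g h := by
  intro q
  constructor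
  · induction q using QuotientAddGroup.induction_on with
    | H b =>
      rw [hh, eq_zero_iff]
      intro hb
      obtain ⟨x, hx⟩ := hN _ hb
      have hker : b - φ x ∈ ψ.ker := by
        rw [AddMonoidHom.mem_ker, map_sub, hx, sub_self]
      refine ⟨⟨b - φ x, hker⟩, ?_⟩
      rw [hg, QuotientAddGroup.eq]
      exact ⟨x, by simp⟩
  · rintro ⟨y, rfl⟩
    rw [hg, hh, AddMonoidHom.mem_ker.1 y.2, QuotientAddGroup.mk_zero]

theorem exact_mk_map_mk_range {P : AddSubgroup B} {N : AddSubgroup A}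
    {h : B ⧸ P → A ⧸ N} (hh : ∀ b, h (mk b) = mk (ψ b))
    {k : A ⧸ N → A ⧸ ψ.range} (hk : ∀ a, k (mk a) = mk a) :
    Function.Exact h k := by
  intro q
  constructor
  · induction q using QuotientAddGroup.induction_on with
    | H a =>
      rw [hk, eq_zero_iff]
      rintro ⟨b, rfl⟩
      exact ⟨mk b, hh b⟩
  · rintro ⟨p, rfl⟩
    induction p using QuotientAddGroup.induction_on with
    | H b =>
      rw [hh, hk, eq_zero_iff]
      exact ⟨b, rfl⟩

end ExactSequence

theorem stmt_4_general (A B : Type*) [AddCommGroup A] [AddCommGroup B] (m : ℕ)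
    (φ : A →+ B) (ψ : B →+ A)
    (hψφ : ∀ a : A, ψ (φ a) = m • a)
    (Am : AddSubgroup A) (hAm : ∀ a : A, a ∈ Am ↔ m • a = 0)
    (mA : AddSubgroup A) (hmA : ∀ a : A, a ∈ mA ↔ ∃ x : A, m • x = a)
    (i : φ.ker → Am) (hi : ∀ x, (i x : A) = (x : A))
    (f : Am → ψ.ker) (hf : ∀ x, (f x : B) = φ (x : A))
    (g : ψ.ker → B ⧸ φ.range) (hg : ∀ x, g x = QuotientAddGroup.mk (x : B))
    (h : B ⧸ φ.range → A ⧸ mA)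
    (hh : ∀ b : B, h (QuotientAddGroup.mk b) = QuotientAddGroup.mk (ψ b))
    (k : A ⧸ mA → A ⧸ ψ.range)
    (hk : ∀ a : A, k (QuotientAddGroup.mk a) = QuotientAddGroup.mk a) :
    Function.Injective i ∧ Function.Exact i f ∧ Function.Exact f g ∧
      Function.Exact g h ∧ Function.Exact h k ∧ Function.Surjective k := by
  have mem_Am_of_map_mem_ker : ∀ a, φ a ∈ ψ.ker → a ∈ Am := fun a ha =>
    (hAm a).2 (hψφ a ▸ AddMonoidHom.mem_ker.1 ha)
  have mA_le_map_range : ∀ a ∈ mA, ∃ x, ψ (φ x) = a := fun a ha =>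
    ((hmA a).1 ha).imp fun x hx => (hψφ x).trans hx
  exact ⟨Subtype.injective_of_val_eq hi, exact_ker_inclusion_restrict hi hf,
    exact_restrict_mk_range mem_Am_of_map_mem_ker hf hg, exact_mk_range_map mA_le_map_range hg hh,
    exact_mk_map_mk_range hh hk, fun q => QuotientAddGroup.induction_on q fun a => ⟨mk a, hk a⟩⟩

/-- For abelian groups `A`, `B` and homomorphisms `φ : A → B`, `ψ : B → A` with
`ψ ∘ φ = m` on `A` and `φ ∘ ψ = m` on `B`, the sequence
`0 → ker φ → A[m] → ker ψ → B/φ(A) → A/mA → A/ψ(B) → 0` is exact, where `A[m] → ker ψ` is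
induced by `φ` and `B/φ(A) → A/mA` is induced by `ψ`. -/
theorem stmt_4 (A B : Type*) [AddCommGroup A] [AddCommGroup B] (m : ℕ) (hm : 0 < m)
    (φ : A →+ B) (ψ : B →+ A)
    (hψφ : ∀ a : A, ψ (φ a) = m • a) (hφψ : ∀ b : B, φ (ψ b) = m • b)
    (Am : AddSubgroup A) (hAm : ∀ a : A, a ∈ Am ↔ m • a = 0)
    (mA : AddSubgroup A) (hmA : ∀ a : A, a ∈ mA ↔ ∃ x : A, m • x = a)
    (i : φ.ker → Am) (hi : ∀ x, (i x : A) = (x : A))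
    (f : Am → ψ.ker) (hf : ∀ x, (f x : B) = φ (x : A))
    (g : ψ.ker → B ⧸ φ.range) (hg : ∀ x, g x = QuotientAddGroup.mk (x : B))
    (h : B ⧸ φ.range → A ⧸ mA)
    (hh : ∀ b : B, h (QuotientAddGroup.mk b) = QuotientAddGroup.mk (ψ b))
    (k : A ⧸ mA → A ⧸ ψ.range)
    (hk : ∀ a : A, k (QuotientAddGroup.mk a) = QuotientAddGroup.mk a) :
    Function.Injective i ∧ Function.Exact i f ∧ Function.Exact f g ∧
      Function.Exact g h ∧ Function.Exact h k ∧ Function.Surjective k :=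
  stmt_4_general A B m φ ψ hψφ Am hAm mA hmA i hi f hf g hg h hh k hk
end

section
/- Let E: y² = x³ + a₂x² + a₄x + a₆ = F(x) be an elliptic curve over a field K of characteristic 0, and let θ be the class of x in M = K[x]/(F(x)). If e₁, e₂, e₃ are points of E(K) with e₁ + e₂ + e₃ = 0 (the group law) and F(x(eᵢ)) ≠ 0 for each i, then the product (x(e₁) − θ)(x(e₂) − θ)(x(e₃) − θ) is a square in M. -/
/-!
Three points with `e₁ + e₂ + e₃ = 0` lie on a line `y = ℓ (x - x₁) + y₁`, so
`F(X) - (ℓ (X - x₁) + y₁)² = (X - x₁)(X - x₂)(X - x₃)`. Evaluating at `θ`, where `F` vanishes,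
gives `(x₁ - θ)(x₂ - θ)(x₃ - θ) = (ℓ (θ - x₁) + y₁)²`.
-/

open Polynomial

namespace WeierstrassCurve.Affine

variable {K : Type*} [Field K] {W : Affine K}

lemma addPolynomial_eq_sq_sub_of_a₁_a₃_eq_zero (ha₁ : W.a₁ = 0) (ha₃ : W.a₃ = 0) (x y ℓ : K) :
    W.addPolynomial x y ℓ =
      (C ℓ * (X - C x) + C y) ^ 2 - (X ^ 3 + C W.a₂ * X ^ 2 + C W.a₄ * X + C W.a₆) := by
  simp only [addPolynomial, linePolynomial, WeierstrassCurve.Affine.polynomial, ha₁, ha₃,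
    eval_add, eval_sub, eval_mul, eval_pow, eval_C, eval_X, C_0]
  ring

lemma exists_addPolynomial_eq_of_add_add_eq_zero [DecidableEq K] {x₁ y₁ x₂ y₂ x₃ y₃ : K}
    {h₁ : W.Nonsingular x₁ y₁} {h₂ : W.Nonsingular x₂ y₂} {h₃ : W.Nonsingular x₃ y₃}
    (hsum : (Point.some _ _ h₁ : W.Point) + Point.some _ _ h₂ + Point.some _ _ h₃ = 0) :
    ∃ ℓ : K, W.addPolynomial x₁ y₁ ℓ = -((X - C x₁) * (X - C x₂) * (X - C x₃)) := by
  have hxy : ¬(x₁ = x₂ ∧ y₁ = W.negY x₂ y₂) := by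
    rintro ⟨hx, hy⟩
    rw [Point.add_of_Y_eq hx hy, zero_add] at hsum
    exact Point.some_ne_zero h₃ hsum
  have hneg := eq_neg_of_add_eq_zero_left hsum
  rw [Point.add_some hxy, Point.neg_some] at hneg
  obtain ⟨hx₃, -⟩ := Point.some.inj hneg
  exact ⟨_, hx₃ ▸ addPolynomial_slope h₁.1 h₂.1 hxy⟩

end WeierstrassCurve.Affine

lemma AdjoinRoot.of_sub_root_mul_mul_eq_sq {R : Type*} [CommRing R] {f g : R[X]} {x₁ x₂ x₃ : R}
    (h : g ^ 2 - f = -((X - C x₁) * (X - C x₂) * (X - C x₃))) :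
    (of f x₁ - root f) * (of f x₂ - root f) * (of f x₃ - root f) = mk f g ^ 2 := by
  have h' := congrArg (mk f) h
  simp only [map_sub, map_pow, map_neg, map_mul, mk_self, mk_X, mk_C] at h'
  linear_combination -h'

open scoped Classical in
theorem stmt_5_general (K : Type*) [Field K] (a₂ a₄ a₆ : K)
    (W : WeierstrassCurve.Affine K)
    (hW : W = { a₁ := 0, a₂ := a₂, a₃ := 0, a₄ := a₄, a₆ := a₆ })
    (F : Polynomial K) (hF : F = X ^ 3 + C a₂ * X ^ 2 + C a₄ * X + C a₆)
    (x₁ y₁ x₂ y₂ x₃ y₃ : K)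
    (h₁ : W.Nonsingular x₁ y₁) (h₂ : W.Nonsingular x₂ y₂) (h₃ : W.Nonsingular x₃ y₃)
    (hsum : (WeierstrassCurve.Affine.Point.some _ _ h₁ : W.Point) +
        WeierstrassCurve.Affine.Point.some _ _ h₂ + WeierstrassCurve.Affine.Point.some _ _ h₃ = 0) :
    ∃ m : AdjoinRoot F,
      (algebraMap K (AdjoinRoot F) x₁ - AdjoinRoot.root F) *
          (algebraMap K (AdjoinRoot F) x₂ - AdjoinRoot.root F) *
            (algebraMap K (AdjoinRoot F) x₃ - AdjoinRoot.root F) = m ^ 2 := by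
  obtain ⟨ℓ, hℓ⟩ := WeierstrassCurve.Affine.exists_addPolynomial_eq_of_add_add_eq_zero hsum
  subst hW hF
  rw [WeierstrassCurve.Affine.addPolynomial_eq_sq_sub_of_a₁_a₃_eq_zero rfl rfl] at hℓ
  exact ⟨_, AdjoinRoot.of_sub_root_mul_mul_eq_sq hℓ⟩

open scoped Classical in
/-- Let `E : y² = x³ + a₂x² + a₄x + a₆ = F(x)` be an elliptic curve over a field
`K` of characteristic 0, and `θ` the class of `x` in `M = K[x]/(F)`. If `e₁, e₂, e₃ ∈ E(K)`
satisfy `e₁ + e₂ + e₃ = 0` and `F(x(eᵢ)) ≠ 0` for each `i`, then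
`(x(e₁) − θ)(x(e₂) − θ)(x(e₃) − θ)` is a square in `M`. -/
theorem stmt_5 (K : Type*) [Field K] [CharZero K] (a₂ a₄ a₆ : K)
    (W : WeierstrassCurve.Affine K)
    (hW : W = { a₁ := 0, a₂ := a₂, a₃ := 0, a₄ := a₄, a₆ := a₆ })
    (F : Polynomial K) (hF : F = X ^ 3 + C a₂ * X ^ 2 + C a₄ * X + C a₆)
    (x₁ y₁ x₂ y₂ x₃ y₃ : K)
    (h₁ : W.Nonsingular x₁ y₁) (h₂ : W.Nonsingular x₂ y₂) (h₃ : W.Nonsingular x₃ y₃)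
    (hsum : (WeierstrassCurve.Affine.Point.some _ _ h₁ : W.Point) +
        WeierstrassCurve.Affine.Point.some _ _ h₂ + WeierstrassCurve.Affine.Point.some _ _ h₃ = 0)
    (hx₁ : F.eval x₁ ≠ 0) (hx₂ : F.eval x₂ ≠ 0) (hx₃ : F.eval x₃ ≠ 0) :
    ∃ m : AdjoinRoot F,
      (algebraMap K (AdjoinRoot F) x₁ - AdjoinRoot.root F) *
          (algebraMap K (AdjoinRoot F) x₂ - AdjoinRoot.root F) *
            (algebraMap K (AdjoinRoot F) x₃ - AdjoinRoot.root F) = m ^ 2 :=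
  stmt_5_general K a₂ a₄ a₆ W hW F hF x₁ y₁ x₂ y₂ x₃ y₃ h₁ h₂ h₃ hsum
end

section
/- Let G be a profinite group (or abstract group), E₁, E₂ divisible abelian G-modules with common m-torsion module Δ, A = (E₁ × E₂)/Δ_E. Let μ₁: E₁^G → H¹(G, Δ) and μ₂: E₂^G → H¹(G, Δ) be the connecting maps from the Kummer sequences 0 → Δ → Eᵢ → Eᵢ → 0 (multiplication by m). Then for all a ∈ A^G, μ₁(p_*(a)) = −μ₂(q_*(a)). -/
/-!
Write `g • x - x = (j₁ d_g, -j₂ d_g)`. Any two `m`-th roots of `m • x.i` differ by an element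
of `Δ`, so the Kummer cocycle `δ₁` of `e₁'` is `g ↦ d_g` up to a coboundary and `δ₂` is
`g ↦ -d_g` up to a coboundary; the sum is therefore a coboundary.
-/

section KummerCocycle

variable {G Δ E : Type*} [Group G] [AddCommGroup Δ] [AddCommGroup E]
  [DistribMulAction G Δ] [DistribMulAction G E]

theorem kummerCocycle_eq_add_coboundary (j : Δ →+ E) (hj : Function.Injective j)
    (hjG : ∀ (g : G) (d : Δ), j (g • d) = g • j d) {e y : E} {a : Δ} (ha : j a = e - y)
    {δ : G → Δ} (hδ : ∀ g : G, j (δ g) = g • e - e) {g : G} {d : Δ}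
    (hd : g • y - y = j d) : δ g = d + (g • a - a) := by
  apply hj
  rw [hδ, map_add, map_sub, hjG, ha, ← hd, smul_sub]
  abel

end KummerCocycle

theorem stmt_10_general (G : Type*) [Group G] (E₁ E₂ Δ : Type*)
    [AddCommGroup E₁] [AddCommGroup E₂] [AddCommGroup Δ]
    [DistribMulAction G E₁] [DistribMulAction G E₂] [DistribMulAction G Δ]
    (m : ℕ)
    (j₁ : Δ →+ E₁) (j₂ : Δ →+ E₂)
    (hj₁ : Function.Injective j₁) (hj₂ : Function.Injective j₂)
    (hj₁G : ∀ (g : G) (d : Δ), j₁ (g • d) = g • j₁ d)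
    (hj₂G : ∀ (g : G) (d : Δ), j₂ (g • d) = g • j₂ d)
    (hj₁tor : ∀ e : E₁, (∃ d, j₁ d = e) ↔ m • e = 0)
    (hj₂tor : ∀ e : E₂, (∃ d, j₂ d = e) ↔ m • e = 0)
    (ΔE : AddSubgroup (E₁ × E₂)) (hΔE : ∀ x, x ∈ ΔE ↔ ∃ d, x = (j₁ d, -j₂ d))
    (x : E₁ × E₂) (hx : ∀ g : G, g • x - x ∈ ΔE)
    (e₁' : E₁) (e₂' : E₂) (he₁' : m • e₁' = m • x.1) (he₂' : m • e₂' = m • x.2)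
    (δ₁ δ₂ : G → Δ)
    (hδ₁ : ∀ g : G, j₁ (δ₁ g) = g • e₁' - e₁') (hδ₂ : ∀ g : G, j₂ (δ₂ g) = g • e₂' - e₂') :
    ∃ c : Δ, ∀ g : G, δ₁ g + δ₂ g = g • c - c := by
  obtain ⟨a, ha⟩ := (hj₁tor (e₁' - x.1)).mpr (by rw [smul_sub, he₁', sub_self])
  obtain ⟨b, hb⟩ := (hj₂tor (e₂' - x.2)).mpr (by rw [smul_sub, he₂', sub_self])
  refine ⟨a + b, fun g => ?_⟩
  obtain ⟨d, hd⟩ := (hΔE _).mp (hx g)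
  have hd₁ : g • x.1 - x.1 = j₁ d := congrArg Prod.fst hd
  have hd₂ : g • x.2 - x.2 = j₂ (-d) := by rw [map_neg]; exact congrArg Prod.snd hd
  rw [kummerCocycle_eq_add_coboundary j₁ hj₁ hj₁G ha hδ₁ hd₁,
    kummerCocycle_eq_add_coboundary j₂ hj₂ hj₂G hb hδ₂ hd₂, smul_add]
  abel

/-- Let `G` act on divisible abelian groups `E₁`, `E₂` with common `m`-torsion
`Δ` (identified via injective equivariant `j₁`, `j₂` with image the `m`-torsion), and let
`A = (E₁ × E₂)/Δ_E`. For every `G`-invariant `a ∈ A^G` (represented by `x` with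
`g • x − x ∈ Δ_E` for all `g`), `μ₁(p_*(a)) = −μ₂(q_*(a))` in `H¹(G, Δ)`: i.e. for any
lifts `e₁'`, `e₂'` with `m • e₁' = p_*(a) = m • x.1`, `m • e₂' = q_*(a) = m • x.2`, the sum of
the Kummer cocycles `δ₁, δ₂ : G → Δ` (defined by `jᵢ (δᵢ g) = g • êᵢ − êᵢ`) is a
coboundary. -/
theorem stmt_10 (G : Type*) [Group G] (E₁ E₂ Δ : Type*)
    [AddCommGroup E₁] [AddCommGroup E₂] [AddCommGroup Δ]
    [DistribMulAction G E₁] [DistribMulAction G E₂] [DistribMulAction G Δ]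
    (m : ℕ) (hm : 2 ≤ m)
    (hdiv₁ : ∀ e : E₁, ∃ e', m • e' = e) (hdiv₂ : ∀ e : E₂, ∃ e', m • e' = e)
    (j₁ : Δ →+ E₁) (j₂ : Δ →+ E₂)
    (hj₁ : Function.Injective j₁) (hj₂ : Function.Injective j₂)
    (hj₁G : ∀ (g : G) (d : Δ), j₁ (g • d) = g • j₁ d)
    (hj₂G : ∀ (g : G) (d : Δ), j₂ (g • d) = g • j₂ d)
    (hj₁tor : ∀ e : E₁, (∃ d, j₁ d = e) ↔ m • e = 0)
    (hj₂tor : ∀ e : E₂, (∃ d, j₂ d = e) ↔ m • e = 0)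
    (ΔE : AddSubgroup (E₁ × E₂)) (hΔE : ∀ x, x ∈ ΔE ↔ ∃ d, x = (j₁ d, -j₂ d))
    (x : E₁ × E₂) (hx : ∀ g : G, g • x - x ∈ ΔE)
    (e₁' : E₁) (e₂' : E₂) (he₁' : m • e₁' = m • x.1) (he₂' : m • e₂' = m • x.2)
    (δ₁ δ₂ : G → Δ)
    (hδ₁ : ∀ g : G, j₁ (δ₁ g) = g • e₁' - e₁') (hδ₂ : ∀ g : G, j₂ (δ₂ g) = g • e₂' - e₂') :
    ∃ c : Δ, ∀ g : G, δ₁ g + δ₂ g = g • c - c :=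
  stmt_10_general G E₁ E₂ Δ m j₁ j₂ hj₁ hj₂ hj₁G hj₂G hj₁tor hj₂tor ΔE hΔE x hx e₁' e₂' he₁' he₂' δ₁
    δ₂ hδ₁ hδ₂
end

section
/- In the setting above, the sequence E₁^G × E₂^G →^{p*+q*} A^G →^{μ₁∘p_*} H¹(G, Δ) is exact: an element a ∈ A^G satisfies μ₁(p_*(a)) = 0 if and only if a is in the image of (e₁, e₂) ↦ p*(e₁) + q*(e₂). -/
/-!
An invariant class `a = [x] ∈ A^G` lifts to an invariant point of `E₁ × E₂` exactly when its first
coordinate can be corrected, by an `m`-torsion element `j₁ d`, to an invariant of `E₁`: the same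
correction `(j₁ d, -j₂ d) ∈ Δ_E` then makes the second coordinate invariant too, because
`g • y - y ∈ Δ_E` has vanishing first coordinate only if it vanishes. If the Kummer cocycle of a
lift `e₁'` of `m • x.1` is the coboundary of `c`, then `e₁' - j₁ c` is such an invariant; conversely
an invariant `e₁` itself has the trivial Kummer cocycle.
-/

section AntiDiagonal

variable {G E₁ E₂ Δ : Type*} [Group G] [AddCommGroup E₁] [AddCommGroup E₂] [AddCommGroup Δ]
  [DistribMulAction G E₁] [DistribMulAction G E₂]
  {j₁ : Δ →+ E₁} {j₂ : Δ →+ E₂} {ΔE : AddSubgroup (E₁ × E₂)}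

theorem smul_sub_map_eq_self_of_coboundary {A B : Type*} [AddCommGroup A] [AddCommGroup B]
    [DistribMulAction G A] [DistribMulAction G B] (j : A →+ B)
    (hj : ∀ (g : G) (a : A), j (g • a) = g • j a) {g : G} {b : B} {c : A}
    (h : g • b - b = j (g • c - c)) : g • (b - j c) = b - j c := by
  rw [smul_sub, ← hj, ← sub_eq_sub_iff_sub_eq_sub, h, map_sub]

theorem smul_mem_of_mem_antidiagonal [DistribMulAction G Δ]
    (hj₁G : ∀ (g : G) (d : Δ), j₁ (g • d) = g • j₁ d)
    (hj₂G : ∀ (g : G) (d : Δ), j₂ (g • d) = g • j₂ d)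
    (hΔE : ∀ x, x ∈ ΔE ↔ ∃ d, x = (j₁ d, -j₂ d)) (g : G) {y : E₁ × E₂} (hy : y ∈ ΔE) :
    g • y ∈ ΔE := by
  obtain ⟨d, rfl⟩ := (hΔE y).mp hy
  exact (hΔE _).mpr ⟨g • d, by rw [Prod.smul_mk, smul_neg, hj₁G, hj₂G]⟩

theorem smul_sub_self_mem_of_sub_mem [DistribMulAction G Δ]
    (hj₁G : ∀ (g : G) (d : Δ), j₁ (g • d) = g • j₁ d)
    (hj₂G : ∀ (g : G) (d : Δ), j₂ (g • d) = g • j₂ d)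
    (hΔE : ∀ x, x ∈ ΔE ↔ ∃ d, x = (j₁ d, -j₂ d)) {g : G} {x y : E₁ × E₂}
    (hx : g • x - x ∈ ΔE) (hxy : y - x ∈ ΔE) : g • y - y ∈ ΔE := by
  have hsplit : g • y - y = (g • x - x) + (g • (y - x) - (y - x)) := by
    rw [smul_sub]; abel
  rw [hsplit]
  exact add_mem hx (sub_mem (smul_mem_of_mem_antidiagonal hj₁G hj₂G hΔE g hxy) hxy)

theorem smul_eq_self_of_fst (hj₁ : Function.Injective j₁)
    (hΔE : ∀ x, x ∈ ΔE ↔ ∃ d, x = (j₁ d, -j₂ d)) {g : G} {y : E₁ × E₂}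
    (hy : g • y - y ∈ ΔE) (hfst : g • y.1 = y.1) : g • y = y := by
  obtain ⟨d, hd⟩ := (hΔE _).mp hy
  have hd₁ : j₁ d = 0 := by
    have := congrArg Prod.fst hd
    rwa [Prod.fst_sub, Prod.smul_fst, hfst, sub_self, eq_comm] at this
  rw [(injective_iff_map_eq_zero j₁).mp hj₁ d hd₁, map_zero, map_zero, neg_zero] at hd
  exact sub_eq_zero.mp hd

end AntiDiagonal

theorem stmt_11_general (G : Type*) [Group G] (E₁ E₂ Δ : Type*)
    [AddCommGroup E₁] [AddCommGroup E₂] [AddCommGroup Δ]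
    [DistribMulAction G E₁] [DistribMulAction G E₂] [DistribMulAction G Δ]
    (m : ℕ)
    (j₁ : Δ →+ E₁) (j₂ : Δ →+ E₂)
    (hj₁ : Function.Injective j₁)
    (hj₁G : ∀ (g : G) (d : Δ), j₁ (g • d) = g • j₁ d)
    (hj₂G : ∀ (g : G) (d : Δ), j₂ (g • d) = g • j₂ d)
    (hj₁tor : ∀ e : E₁, (∃ d, j₁ d = e) ↔ m • e = 0)
    (ΔE : AddSubgroup (E₁ × E₂)) (hΔE : ∀ x, x ∈ ΔE ↔ ∃ d, x = (j₁ d, -j₂ d))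
    (x : E₁ × E₂) (hx : ∀ g : G, g • x - x ∈ ΔE) :
    (∃ (e₁' : E₁) (δ₁ : G → Δ) (c : Δ), m • e₁' = m • x.1 ∧
        (∀ g : G, j₁ (δ₁ g) = g • e₁' - e₁') ∧ (∀ g : G, δ₁ g = g • c - c)) ↔
      ∃ (e₁ : E₁) (e₂ : E₂), (∀ g : G, g • e₁ = e₁) ∧ (∀ g : G, g • e₂ = e₂) ∧
        (e₁, e₂) - x ∈ ΔE := by
  have hker (a b : E₁) : (∃ d, j₁ d = a - b) ↔ m • a = m • b := by
    rw [hj₁tor, smul_sub, sub_eq_zero]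
  constructor
  · rintro ⟨e₁', δ₁, c, hme, hδ, hc⟩
    have hinv₁ (g : G) : g • (e₁' - j₁ c) = e₁' - j₁ c :=
      smul_sub_map_eq_self_of_coboundary j₁ hj₁G (by rw [← hδ, hc])
    have hmc : m • j₁ c = 0 := (hj₁tor _).mp ⟨c, rfl⟩
    obtain ⟨d, hd⟩ := (hker (e₁' - j₁ c) x.1).mpr (by rw [smul_sub, hmc, sub_zero, hme])
    have hmem : (e₁' - j₁ c, x.2 - j₂ d) - x ∈ ΔE :=
      (hΔE _).mpr ⟨d, Prod.ext hd.symm (sub_sub_cancel_left x.2 (j₂ d))⟩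
    have hinv (g : G) : g • (e₁' - j₁ c, x.2 - j₂ d) = (e₁' - j₁ c, x.2 - j₂ d) :=
      smul_eq_self_of_fst hj₁ hΔE (smul_sub_self_mem_of_sub_mem hj₁G hj₂G hΔE (hx g) hmem)
        (hinv₁ g)
    exact ⟨_, _, hinv₁, fun g => congrArg Prod.snd (hinv g), hmem⟩
  · rintro ⟨e₁, e₂, hinv₁, -, hmem⟩
    obtain ⟨d, hd⟩ := (hΔE _).mp hmem
    refine ⟨e₁, 0, 0, (hker e₁ x.1).mp ⟨d, (congrArg Prod.fst hd).symm⟩, fun g => ?_,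
      fun g => ?_⟩
    · rw [Pi.zero_apply, map_zero, hinv₁ g, sub_self]
    · rw [Pi.zero_apply, smul_zero, sub_self]

/-- In the setting of the anti-diagonal construction with divisible `G`-modules
`E₁`, `E₂` and common `m`-torsion `Δ`, the sequence
`E₁^G × E₂^G → A^G → H¹(G, Δ)` (via `p* + q*` and then `μ₁ ∘ p_*`) is exact: an invariant
`a ∈ A^G` (represented by `x` with `g • x − x ∈ Δ_E` for all `g`) satisfies
`μ₁(p_*(a)) = 0` (i.e. some lift `e₁'` with `m • e₁' = p_*(a) = m • x.1` has Kummer cocycle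
a coboundary) if and only if `a` is in the image of `(e₁, e₂) ↦ p*(e₁) + q*(e₂)` on
invariant points, i.e. `(e₁, e₂) − x ∈ Δ_E` for some invariants `e₁`, `e₂`. -/
theorem stmt_11 (G : Type*) [Group G] (E₁ E₂ Δ : Type*)
    [AddCommGroup E₁] [AddCommGroup E₂] [AddCommGroup Δ]
    [DistribMulAction G E₁] [DistribMulAction G E₂] [DistribMulAction G Δ]
    (m : ℕ) (hm : 2 ≤ m)
    (hdiv₁ : ∀ e : E₁, ∃ e', m • e' = e) (hdiv₂ : ∀ e : E₂, ∃ e', m • e' = e)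
    (j₁ : Δ →+ E₁) (j₂ : Δ →+ E₂)
    (hj₁ : Function.Injective j₁) (hj₂ : Function.Injective j₂)
    (hj₁G : ∀ (g : G) (d : Δ), j₁ (g • d) = g • j₁ d)
    (hj₂G : ∀ (g : G) (d : Δ), j₂ (g • d) = g • j₂ d)
    (hj₁tor : ∀ e : E₁, (∃ d, j₁ d = e) ↔ m • e = 0)
    (hj₂tor : ∀ e : E₂, (∃ d, j₂ d = e) ↔ m • e = 0)
    (ΔE : AddSubgroup (E₁ × E₂)) (hΔE : ∀ x, x ∈ ΔE ↔ ∃ d, x = (j₁ d, -j₂ d))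
    (x : E₁ × E₂) (hx : ∀ g : G, g • x - x ∈ ΔE) :
    (∃ (e₁' : E₁) (δ₁ : G → Δ) (c : Δ), m • e₁' = m • x.1 ∧
        (∀ g : G, j₁ (δ₁ g) = g • e₁' - e₁') ∧ (∀ g : G, δ₁ g = g • c - c)) ↔
      ∃ (e₁ : E₁) (e₂ : E₂), (∀ g : G, g • e₁ = e₁) ∧ (∀ g : G, g • e₂ = e₂) ∧
        (e₁, e₂) - x ∈ ΔE :=
  stmt_11_general G E₁ E₂ Δ m j₁ j₂ hj₁ hj₁G hj₂G hj₁tor ΔE hΔE x hx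
end

section
/- In the setting above, the sequence A^G →^{p_*×q_*} E₁^G × E₂^G →^{μ₁+μ₂} H¹(G,Δ) is exact: a pair (e₁, e₂) of invariant points satisfies μ₁(e₁) + μ₂(e₂) = 0 in H¹(G, Δ) if and only if there exists a ∈ A^G with p_*(a) = e₁ and q_*(a) = e₂. -/
/-!
Write `x = (x₁, x₂)` for a lift of `(e₁, e₂)` through multiplication by `m`. The point
`x` is `G`-invariant modulo `Δ_E` exactly when the two Kummer cocycles `g ↦ g • xᵢ - xᵢ`
are negatives of each other, so exactness amounts to absorbing a coboundary `g • c - c`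
into the lift: replacing `x₁` by `x₁ - j₁ c` changes neither `m • x₁ = e₁` (as `j₁ c` is
`m`-torsion) nor the cohomology class, and kills the coboundary.
-/

section Kummer

variable {G E Δ : Type*} [Group G] [AddCommGroup E] [AddCommGroup Δ]
  [DistribMulAction G E] [DistribMulAction G Δ]

theorem smul_sub_self_sub_map_eq_neg_of_add_eq (j : Δ →+ E)
    (hj : ∀ (g : G) (d : Δ), j (g • d) = g • j d) {g : G} {e : E} {c δ₁ δ₂ : Δ}
    (hδ₁ : j δ₁ = g • e - e) (hc : δ₁ + δ₂ = g • c - c) :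
    g • (e - j c) - (e - j c) = -j δ₂ := by
  have hjc : g • j c - j c = j δ₁ + j δ₂ := by rw [← map_add, hc, map_sub, hj]
  rw [smul_sub]
  linear_combination (norm := abel) -hjc - hδ₁

end Kummer

theorem stmt_12_general (G : Type*) [Group G] (E₁ E₂ Δ : Type*)
    [AddCommGroup E₁] [AddCommGroup E₂] [AddCommGroup Δ]
    [DistribMulAction G E₁] [DistribMulAction G E₂] [DistribMulAction G Δ]
    (m : ℕ)
    (j₁ : Δ →+ E₁) (j₂ : Δ →+ E₂)
    (hj₁G : ∀ (g : G) (d : Δ), j₁ (g • d) = g • j₁ d)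
    (hj₁tor : ∀ e : E₁, (∃ d, j₁ d = e) ↔ m • e = 0)
    (ΔE : AddSubgroup (E₁ × E₂)) (hΔE : ∀ x, x ∈ ΔE ↔ ∃ d, x = (j₁ d, -j₂ d))
    (e₁ : E₁) (e₂ : E₂) :
    (∃ (e₁' : E₁) (e₂' : E₂) (δ₁ δ₂ : G → Δ) (c : Δ),
        m • e₁' = e₁ ∧ m • e₂' = e₂ ∧
        (∀ g : G, j₁ (δ₁ g) = g • e₁' - e₁') ∧ (∀ g : G, j₂ (δ₂ g) = g • e₂' - e₂') ∧
        (∀ g : G, δ₁ g + δ₂ g = g • c - c)) ↔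
      ∃ x : E₁ × E₂, (∀ g : G, g • x - x ∈ ΔE) ∧ m • x.1 = e₁ ∧ m • x.2 = e₂ := by
  constructor
  · rintro ⟨e₁', e₂', δ₁, δ₂, c, h₁, h₂, hδ₁, hδ₂, hc⟩
    have hc_tor : m • j₁ c = 0 := (hj₁tor (j₁ c)).mp ⟨c, rfl⟩
    refine ⟨(e₁' - j₁ c, e₂'), fun g => (hΔE _).mpr ⟨-δ₂ g, ?_⟩, by rw [smul_sub, h₁, hc_tor, sub_zero], h₂⟩
    rw [map_neg, map_neg, neg_neg, hδ₂,
      ← smul_sub_self_sub_map_eq_neg_of_add_eq j₁ hj₁G (hδ₁ g) (hc g)]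
    rfl
  · rintro ⟨x, hx, h₁, h₂⟩
    choose d hd using fun g => (hΔE _).mp (hx g)
    refine ⟨x.1, x.2, d, fun g => -d g, 0, h₁, h₂, fun g => ?_, fun g => ?_, fun g => ?_⟩
    · exact (congrArg Prod.fst (hd g)).symm
    · simpa using (congrArg Prod.snd (hd g)).symm
    · simp

/-- In the setting of the anti-diagonal construction with divisible `G`-modules
`E₁`, `E₂` and common `m`-torsion `Δ`, the sequence
`A^G → E₁^G × E₂^G → H¹(G, Δ)` (via `p_* × q_*` and then `μ₁ + μ₂`) is exact: a pair
`(e₁, e₂)` of invariant points satisfies `μ₁(e₁) + μ₂(e₂) = 0` in `H¹(G, Δ)` (i.e. for some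
lifts `e₁'`, `e₂'` with `m • e₁' = e₁`, `m • e₂' = e₂`, the sum of the Kummer cocycles is a
coboundary) if and only if there is an invariant `a ∈ A^G` (represented by `x` with
`g • x − x ∈ Δ_E` for all `g`) with `p_*(a) = m • x.1 = e₁` and `q_*(a) = m • x.2 = e₂`. -/
theorem stmt_12 (G : Type*) [Group G] (E₁ E₂ Δ : Type*)
    [AddCommGroup E₁] [AddCommGroup E₂] [AddCommGroup Δ]
    [DistribMulAction G E₁] [DistribMulAction G E₂] [DistribMulAction G Δ]
    (m : ℕ) (hm : 2 ≤ m)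
    (hdiv₁ : ∀ e : E₁, ∃ e', m • e' = e) (hdiv₂ : ∀ e : E₂, ∃ e', m • e' = e)
    (j₁ : Δ →+ E₁) (j₂ : Δ →+ E₂)
    (hj₁ : Function.Injective j₁) (hj₂ : Function.Injective j₂)
    (hj₁G : ∀ (g : G) (d : Δ), j₁ (g • d) = g • j₁ d)
    (hj₂G : ∀ (g : G) (d : Δ), j₂ (g • d) = g • j₂ d)
    (hj₁tor : ∀ e : E₁, (∃ d, j₁ d = e) ↔ m • e = 0)
    (hj₂tor : ∀ e : E₂, (∃ d, j₂ d = e) ↔ m • e = 0)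
    (ΔE : AddSubgroup (E₁ × E₂)) (hΔE : ∀ x, x ∈ ΔE ↔ ∃ d, x = (j₁ d, -j₂ d))
    (e₁ : E₁) (e₂ : E₂) (he₁ : ∀ g : G, g • e₁ = e₁) (he₂ : ∀ g : G, g • e₂ = e₂) :
    (∃ (e₁' : E₁) (e₂' : E₂) (δ₁ δ₂ : G → Δ) (c : Δ),
        m • e₁' = e₁ ∧ m • e₂' = e₂ ∧
        (∀ g : G, j₁ (δ₁ g) = g • e₁' - e₁') ∧ (∀ g : G, j₂ (δ₂ g) = g • e₂' - e₂') ∧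
        (∀ g : G, δ₁ g + δ₂ g = g • c - c)) ↔
      ∃ x : E₁ × E₂, (∀ g : G, g • x - x ∈ ΔE) ∧ m • x.1 = e₁ ∧ m • x.2 = e₂ :=
  stmt_12_general G E₁ E₂ Δ m j₁ j₂ hj₁G hj₁tor ΔE hΔE e₁ e₂
end

section
/- Let E be the elliptic curve y² = x³ − 22x² + 21x + 1 over ℚ. Then the points (0,1) and (1,1) lie on E and generate a free subgroup of rank 2 of E(ℚ); in particular the Mordell–Weil rank of E(ℚ) is at least 2. -/
/-!
If `T = (t, s)` and `2 • T = (x₀, y₀)` on `y² = f(x) = x³ + a₂x² + a₄x + a₆`, the tangent at `T`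
has slope `f'(t) / 2s` and `x₀ = (f'(t) / 2s)² - a₂ - 2t`, so `t` is a root of the quartic
`f'(t)² - 4 f(t) (x₀ + a₂ + 2t)`. For `P = (0, 1)`, `Q = (1, 1)` and `P + Q = (21, -1)` these
quartics are monic integer polynomials without roots modulo `7`, `11` and `7`, hence without
rational roots, and `f` has no root modulo `3`. So `E(ℚ)` has no `2`-torsion and none of `P`, `Q`,
`P + Q` lies in `2 E(ℚ)`. A relation `a • P + b • Q = 0` then forces `a` and `b` to be even, and
halving it gives another relation; iterating, `a` and `b` are divisible by every power of `2`.
-/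

open Polynomial

theorem Polynomial.Monic.aeval_rat_ne_zero_of_forall_zmod {p : ℤ[X]} (hp : p.Monic) (n : ℕ)
    (h : ∀ a : ZMod n, aeval a p ≠ 0) (r : ℚ) : aeval r p ≠ 0 := by
  intro hr
  obtain ⟨z, rfl, -⟩ := exists_integer_of_is_root_of_monic hp hr
  rw [aeval_algebraMap_apply, map_eq_zero_iff _ (algebraMap ℤ ℚ).injective_int] at hr
  exact h z (by rw [← eq_intCast (algebraMap ℤ (ZMod n)), aeval_algebraMap_apply, hr, map_zero])

section TwoDivisibility

variable {G : Type*} [AddCommGroup G] {P Q : G}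

theorem exists_half_of_zsmul_add_zsmul_eq_zero (htors : ∀ X : G, 2 • X = 0 → X = 0)
    (hP : ∀ X : G, 2 • X ≠ P) (hQ : ∀ X : G, 2 • X ≠ Q) (hPQ : ∀ X : G, 2 • X ≠ P + Q)
    {a b : ℤ} (h : a • P + b • Q = 0) :
    ∃ a' b' : ℤ, a = 2 * a' ∧ b = 2 * b' ∧ a' • P + b' • Q = 0 := by
  obtain ⟨k, rfl | rfl⟩ := Int.even_or_odd' a <;> obtain ⟨m, rfl | rfl⟩ := Int.even_or_odd' b
  · exact ⟨k, m, rfl, rfl, htors _ (by linear_combination (norm := module) h)⟩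
  · exact (hQ (-(k • P + m • Q)) (by linear_combination (norm := module) -h)).elim
  · exact (hP (-(k • P + m • Q)) (by linear_combination (norm := module) -h)).elim
  · exact (hPQ (-(k • P + m • Q)) (by linear_combination (norm := module) -h)).elim

theorem two_pow_dvd_of_zsmul_add_zsmul_eq_zero (htors : ∀ X : G, 2 • X = 0 → X = 0)
    (hP : ∀ X : G, 2 • X ≠ P) (hQ : ∀ X : G, 2 • X ≠ Q) (hPQ : ∀ X : G, 2 • X ≠ P + Q)
    (n : ℕ) {a b : ℤ} (h : a • P + b • Q = 0) : 2 ^ n ∣ a ∧ 2 ^ n ∣ b := by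
  induction n generalizing a b with
  | zero => simp
  | succ n ih =>
    obtain ⟨a', b', rfl, rfl, h'⟩ := exists_half_of_zsmul_add_zsmul_eq_zero htors hP hQ hPQ h
    rw [pow_succ']
    exact ⟨mul_dvd_mul_left 2 (ih h').1, mul_dvd_mul_left 2 (ih h').2⟩

theorem injective_zsmul_add_zsmul_of_forall_two_nsmul_ne (htors : ∀ X : G, 2 • X = 0 → X = 0)
    (hP : ∀ X : G, 2 • X ≠ P) (hQ : ∀ X : G, 2 • X ≠ Q) (hPQ : ∀ X : G, 2 • X ≠ P + Q) :
    Function.Injective fun v : ℤ × ℤ => v.1 • P + v.2 • Q := by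
  have eq_zero : ∀ c : ℤ, (∀ n : ℕ, 2 ^ n ∣ c) → c = 0 := fun c hc =>
    Int.eq_zero_of_dvd_of_natAbs_lt_natAbs (hc c.natAbs) (by simpa using Nat.lt_two_pow_self)
  intro v w hvw
  have h : (v.1 - w.1) • P + (v.2 - w.2) • Q = 0 := by
    linear_combination (norm := module) hvw
  have hdvd := fun n => two_pow_dvd_of_zsmul_add_zsmul_eq_zero htors hP hQ hPQ n h
  ext
  · exact sub_eq_zero.mp (eq_zero _ fun n => (hdvd n).1)
  · exact sub_eq_zero.mp (eq_zero _ fun n => (hdvd n).2)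

end TwoDivisibility

namespace WeierstrassCurve.Affine

variable {F : Type*} [Field F] {W : Affine F}

lemma equation_iff_of_a₁_a₃ (ha₁ : W.a₁ = 0) (ha₃ : W.a₃ = 0) {x y : F} :
    W.Equation x y ↔ y ^ 2 = x ^ 3 + W.a₂ * x ^ 2 + W.a₄ * x + W.a₆ := by
  rw [equation_iff, ha₁, ha₃]
  constructor <;> intro h <;> linear_combination h

lemma negY_of_a₁_a₃ (ha₁ : W.a₁ = 0) (ha₃ : W.a₃ = 0) (x y : F) : W.negY x y = -y := by
  simp [negY, ha₁, ha₃]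

namespace Point

variable [DecidableEq F]

lemma sq_eq_of_add_self_eq_some (ha₁ : W.a₁ = 0) (ha₃ : W.a₃ = 0) {t s x₀ y₀ : F}
    {h : W.Nonsingular t s} {h₀ : W.Nonsingular x₀ y₀} (hs : s ≠ W.negY t s)
    (heq : some t s h + some t s h = some x₀ y₀ h₀) :
    (3 * t ^ 2 + 2 * W.a₂ * t + W.a₄) ^ 2
      = 4 * (t ^ 3 + W.a₂ * t ^ 2 + W.a₄ * t + W.a₆) * (x₀ + W.a₂ + 2 * t) := by
  rw [negY_of_a₁_a₃ ha₁ ha₃] at hs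
  have h2s : 2 * s ≠ 0 := fun h2s => hs (by linear_combination h2s)
  have hsq := (equation_iff_of_a₁_a₃ ha₁ ha₃).mp h.1
  rw [add_self_of_Y_ne (by rwa [negY_of_a₁_a₃ ha₁ ha₃]), some.injEq] at heq
  obtain ⟨hx, -⟩ := heq
  rw [slope_of_Y_ne rfl (by rwa [negY_of_a₁_a₃ ha₁ ha₃]), negY_of_a₁_a₃ ha₁ ha₃, addX,
    ha₁, sub_neg_eq_add, ← two_mul] at hx
  simp only [zero_mul, sub_zero, add_zero] at hx
  have hx' : ((3 * t ^ 2 + 2 * W.a₂ * t + W.a₄) / (2 * s)) ^ 2 = x₀ + W.a₂ + 2 * t := by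
    linear_combination hx
  rw [div_pow, div_eq_iff (pow_ne_zero 2 h2s)] at hx'
  linear_combination hx' + 4 * (x₀ + W.a₂ + 2 * t) * hsq

lemma two_nsmul_ne_some (ha₁ : W.a₁ = 0) (ha₃ : W.a₃ = 0) {x₀ y₀ : F} (h₀ : W.Nonsingular x₀ y₀)
    (hroot : ∀ t : F, (3 * t ^ 2 + 2 * W.a₂ * t + W.a₄) ^ 2
      ≠ 4 * (t ^ 3 + W.a₂ * t ^ 2 + W.a₄ * t + W.a₆) * (x₀ + W.a₂ + 2 * t))
    (T : W.Point) : 2 • T ≠ some x₀ y₀ h₀ := by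
  rw [two_nsmul]
  rcases T with _ | @⟨t, s, h⟩
  · exact (some_ne_zero h₀).symm
  · by_cases hs : s = W.negY t s
    · rw [add_self_of_Y_eq hs]
      exact (some_ne_zero h₀).symm
    · exact fun heq => hroot t (sq_eq_of_add_self_eq_some ha₁ ha₃ hs heq)

lemma eq_zero_of_two_nsmul_eq_zero (ha₁ : W.a₁ = 0) (ha₃ : W.a₃ = 0) (h2 : (2 : F) ≠ 0)
    (hroot : ∀ t : F, t ^ 3 + W.a₂ * t ^ 2 + W.a₄ * t + W.a₆ ≠ 0) {T : W.Point}
    (hT : 2 • T = 0) : T = 0 := by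
  rw [two_nsmul] at hT
  rcases T with _ | @⟨t, s, h⟩
  · rfl
  · by_cases hs : s = W.negY t s
    · rw [negY_of_a₁_a₃ ha₁ ha₃, eq_neg_iff_add_eq_zero, ← two_mul, mul_eq_zero,
        or_iff_right h2] at hs
      have hsq := (equation_iff_of_a₁_a₃ ha₁ ha₃).mp h.1
      exact (hroot t (by rw [← hsq, hs, zero_pow two_ne_zero])).elim
    · exact (some_ne_zero _ (add_self_of_Y_ne hs ▸ hT)).elim

end Point

end WeierstrassCurve.Affine

namespace RankTwoExample

open WeierstrassCurve.Affine

def E : WeierstrassCurve.Affine ℚ := { a₁ := 0, a₂ := -22, a₃ := 0, a₄ := 21, a₆ := 1 }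

lemma E_Δ_ne_zero : E.Δ ≠ 0 := by
  norm_num [E, WeierstrassCurve.Δ, WeierstrassCurve.b₂, WeierstrassCurve.b₄, WeierstrassCurve.b₆,
    WeierstrassCurve.b₈]

lemma nonsingular_of_equation {x y : ℚ} (h : y ^ 2 = x ^ 3 - 22 * x ^ 2 + 21 * x + 1) :
    E.Nonsingular x y :=
  (E.equation_iff_nonsingular_of_Δ_ne_zero E_Δ_ne_zero).mp
    ((equation_iff_of_a₁_a₃ rfl rfl).mpr (by simp only [E]; linear_combination h))

lemma nonsingular_P : E.Nonsingular 0 1 := nonsingular_of_equation (by norm_num)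

lemma nonsingular_Q : E.Nonsingular 1 1 := nonsingular_of_equation (by norm_num)

lemma nonsingular_P_add_Q : E.Nonsingular 21 (-1) := nonsingular_of_equation (by norm_num)

def P : E.Point := .some _ _ nonsingular_P

def Q : E.Point := .some _ _ nonsingular_Q

lemma P_add_Q : P + Q = .some _ _ nonsingular_P_add_Q := by
  rw [P, Q, Point.add_of_X_ne (by norm_num : (0 : ℚ) ≠ 1), Point.some.injEq,
    slope_of_X_ne (by norm_num : (0 : ℚ) ≠ 1)]
  norm_num [addX, addY, negAddY, negY, E]

lemma cubic_ne_zero (t : ℚ) : t ^ 3 - 22 * t ^ 2 + 21 * t + 1 ≠ 0 := by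
  have hp : (X ^ 3 - 22 * X ^ 2 + 21 * X + 1 : ℤ[X]).Monic := by monicity!
  have hroot := hp.aeval_rat_ne_zero_of_forall_zmod 3
  simp only [map_add, map_sub, map_mul, map_pow, aeval_X, map_ofNat, map_one] at hroot
  exact hroot (by decide) t

lemma quartic_P_ne_zero (t : ℚ) : t ^ 4 - 42 * t ^ 2 - 8 * t + 529 ≠ 0 := by
  have hp : (X ^ 4 - 42 * X ^ 2 - 8 * X + 529 : ℤ[X]).Monic := by monicity!
  have hroot := hp.aeval_rat_ne_zero_of_forall_zmod 7
  simp only [map_add, map_sub, map_mul, map_pow, aeval_X, map_ofNat] at hroot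
  exact hroot (by decide) t

lemma quartic_Q_ne_zero (t : ℚ) : t ^ 4 - 4 * t ^ 3 + 46 * t ^ 2 - 92 * t + 525 ≠ 0 := by
  have hp : (X ^ 4 - 4 * X ^ 3 + 46 * X ^ 2 - 92 * X + 525 : ℤ[X]).Monic := by monicity!
  have hroot := hp.aeval_rat_ne_zero_of_forall_zmod 11
  simp only [map_add, map_sub, map_mul, map_pow, aeval_X, map_ofNat] at hroot
  exact hroot (by decide) t

lemma quartic_P_add_Q_ne_zero (t : ℚ) : t ^ 4 - 84 * t ^ 3 + 1806 * t ^ 2 - 1772 * t + 445 ≠ 0 := by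
  have hp : (X ^ 4 - 84 * X ^ 3 + 1806 * X ^ 2 - 1772 * X + 445 : ℤ[X]).Monic := by monicity!
  have hroot := hp.aeval_rat_ne_zero_of_forall_zmod 7
  simp only [map_add, map_sub, map_mul, map_pow, aeval_X, map_ofNat] at hroot
  exact hroot (by decide) t

lemma eq_zero_of_two_nsmul_eq_zero (T : E.Point) (hT : 2 • T = 0) : T = 0 :=
  Point.eq_zero_of_two_nsmul_eq_zero rfl rfl two_ne_zero
    (fun t ht => cubic_ne_zero t (by simp only [E] at ht; linear_combination ht)) hT

lemma two_nsmul_ne_P (T : E.Point) : 2 • T ≠ P :=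
  Point.two_nsmul_ne_some rfl rfl nonsingular_P
    (fun t ht => quartic_P_ne_zero t (by simp only [E] at ht; linear_combination ht)) T

lemma two_nsmul_ne_Q (T : E.Point) : 2 • T ≠ Q :=
  Point.two_nsmul_ne_some rfl rfl nonsingular_Q
    (fun t ht => quartic_Q_ne_zero t (by simp only [E] at ht; linear_combination ht)) T

lemma two_nsmul_ne_P_add_Q (T : E.Point) : 2 • T ≠ P + Q :=
  P_add_Q ▸ Point.two_nsmul_ne_some rfl rfl nonsingular_P_add_Q
    (fun t ht => quartic_P_add_Q_ne_zero t (by simp only [E] at ht; linear_combination ht)) T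

end RankTwoExample

/-- On the elliptic curve `E : y² = x³ − 22x² + 21x + 1` over `ℚ`, the points
`(0,1)` and `(1,1)` lie on `E` and generate a free subgroup of rank `2` of `E(ℚ)`;
in particular the Mordell–Weil rank of `E(ℚ)` is at least `2`. -/
theorem stmt_14 (W : WeierstrassCurve.Affine ℚ)
    (hW : W = { a₁ := 0, a₂ := -22, a₃ := 0, a₄ := 21, a₆ := 1 }) :
    W.Equation 0 1 ∧ W.Equation 1 1 ∧
      ∃ (h₁ : W.Nonsingular 0 1) (h₂ : W.Nonsingular 1 1),
        Function.Injective (fun v : ℤ × ℤ =>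
          v.1 • (WeierstrassCurve.Affine.Point.some 0 1 h₁ : W.Point) +
            v.2 • (WeierstrassCurve.Affine.Point.some 1 1 h₂ : W.Point)) := by
  subst hW
  open RankTwoExample in
  exact ⟨nonsingular_P.1, nonsingular_Q.1, nonsingular_P, nonsingular_Q,
    injective_zsmul_add_zsmul_of_forall_two_nsmul_ne eq_zero_of_two_nsmul_eq_zero two_nsmul_ne_P
      two_nsmul_ne_Q two_nsmul_ne_P_add_Q⟩
end

section
/- Let E₂ be the elliptic curve given by 2y² = x³ − 22x² + 21x + 1 over ℚ. Then the points (1/2, 7/4) and (1/8, 41/32) lie on E₂ and generate a free subgroup of rank 2; in particular rk E₂(ℚ) ≥ 2. -/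
/-!
Two-descent by the `x - θ` map. Let `θ` be a root of the cubic `f` of `y² = f(x)` in a
`ℚ`-algebra `A` in which every `x - θ` with `x ∈ ℚ` is a unit. A line meets the curve in three
points whose `x`-coordinates are the roots of `f(X) - (ℓ X + c)²`, so `∏ (xᵢ - θ) = (ℓ θ + c)²`,
and `P ↦ x(P) - θ` is a homomorphism from `E(ℚ)` to `Aˣ / (Aˣ)²`, a group of exponent two.

For `A = ℚ₁₁ × ℚ₁₉` and `θ` the Hensel lifts of the simple roots `10 mod 11` and `9 mod 19` of
`f = X³ - 44 X² + 84 X + 8`, the images of `P = (1, 7)`, `Q = (1/4, 41/8)` and `P + Q` are not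
squares, because their reductions are non-residues mod `11` or `19`. Hence `m P + n Q = 0` forces
`m` and `n` to be even. Since `f` has no rational root, `E(ℚ)` has no `2`-torsion, so
`(m/2) P + (n/2) Q = 0` as well, and infinite descent gives `m = n = 0`.
-/

open Polynomial

theorem Prod.not_isSquare_of_not_isSquare_fst {M N : Type*} [Mul M] [Mul N] {a : M × N}
    (h : ¬ IsSquare a.1) : ¬ IsSquare a :=
  fun ⟨r, hr⟩ => h ⟨r.1, congrArg Prod.fst hr⟩

theorem Prod.not_isSquare_of_not_isSquare_snd {M N : Type*} [Mul M] [Mul N] {a : M × N}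
    (h : ¬ IsSquare a.2) : ¬ IsSquare a :=
  fun ⟨r, hr⟩ => h ⟨r.2, congrArg Prod.snd hr⟩

theorem Units.isSquare_val_iff {M : Type*} [CommMonoid M] (u : Mˣ) :
    IsSquare (u : M) ↔ IsSquare u := by
  constructor
  · rintro ⟨r, hr⟩
    have hr' : IsUnit r := isUnit_of_mul_isUnit_left (hr ▸ u.isUnit)
    exact ⟨hr'.unit, Units.ext hr⟩
  · rintro ⟨r, rfl⟩
    exact ⟨r, Units.val_mul r r⟩

namespace QuotientGroup

variable {G : Type*} [CommGroup G]

theorem mk_eq_one_iff_isSquare (a : G) : (a : G ⧸ Subgroup.square G) = 1 ↔ IsSquare a :=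
  eq_one_iff a

theorem mul_self_eq_one_of_square (q : G ⧸ Subgroup.square G) : q * q = 1 := by
  induction q using QuotientGroup.induction_on with
  | H a => rw [← mk_mul, mk_eq_one_iff_isSquare]; exact IsSquare.mul_self a

theorem mk_eq_mk_mul_mk_of_isSquare {a b c : G} (h : IsSquare (a * b * c)) :
    (c : G ⧸ Subgroup.square G) = a * b := by
  rw [← mk_eq_one_iff_isSquare, mk_mul, mk_mul] at h
  rw [eq_inv_of_mul_eq_one_right h, inv_eq_of_mul_eq_one_right (mul_self_eq_one_of_square _)]

end QuotientGroup

section ZSMulAddZSMul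

variable {G H : Type*} [AddCommGroup G] [AddCommGroup H] (φ : G →+ H) {P Q : G}

theorem two_dvd_of_zsmul_add_zsmul_eq_zero (hH : ∀ h : H, h + h = 0) (hP : φ P ≠ 0)
    (hQ : φ Q ≠ 0) (hPQ : φ P + φ Q ≠ 0) {m n : ℤ} (h : m • P + n • Q = 0) :
    2 ∣ m ∧ 2 ∣ n := by
  have heven (k : ℤ) (g : H) : (2 * k) • g = 0 := by
    rw [mul_comm, mul_zsmul, two_zsmul, hH, zsmul_zero]
  have hφ := congrArg φ h
  rw [map_add, map_zsmul, map_zsmul, map_zero] at hφ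
  rcases Int.even_or_odd' m with ⟨a, rfl | rfl⟩ <;> rcases Int.even_or_odd' n with ⟨b, rfl | rfl⟩
  · exact ⟨dvd_mul_right 2 a, dvd_mul_right 2 b⟩
  all_goals simp only [add_zsmul, heven, one_zsmul, zero_add, add_zero] at hφ
  · exact absurd hφ hQ
  · exact absurd hφ hP
  · exact absurd hφ hPQ

theorem pow_two_dvd_of_zsmul_add_zsmul_eq_zero (hH : ∀ h : H, h + h = 0)
    (hG : ∀ g : G, g + g = 0 → g = 0) (hP : φ P ≠ 0) (hQ : φ Q ≠ 0) (hPQ : φ P + φ Q ≠ 0)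
    (k : ℕ) {m n : ℤ} (h : m • P + n • Q = 0) : 2 ^ k ∣ m ∧ 2 ^ k ∣ n := by
  induction k generalizing m n with
  | zero => simp
  | succ k ih =>
    obtain ⟨⟨a, rfl⟩, ⟨b, rfl⟩⟩ := two_dvd_of_zsmul_add_zsmul_eq_zero φ hH hP hQ hPQ h
    obtain ⟨ha, hb⟩ := ih (hG (a • P + b • Q) (by rw [← h]; module))
    rw [pow_succ']
    exact ⟨mul_dvd_mul_left 2 ha, mul_dvd_mul_left 2 hb⟩

theorem injective_zsmul_add_zsmul (hH : ∀ h : H, h + h = 0)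
    (hG : ∀ g : G, g + g = 0 → g = 0) (hP : φ P ≠ 0) (hQ : φ Q ≠ 0) (hPQ : φ P + φ Q ≠ 0) :
    Function.Injective (fun v : ℤ × ℤ => v.1 • P + v.2 • Q) := by
  have hzero (m : ℤ) (hm : ∀ k : ℕ, 2 ^ k ∣ m) : m = 0 :=
    Int.eq_zero_of_dvd_of_natAbs_lt_natAbs (hm m.natAbs) (by simpa using Nat.lt_two_pow_self)
  intro v w hvw
  have h : (v.1 - w.1) • P + (v.2 - w.2) • Q = 0 :=
    calc _ = (v.1 • P + v.2 • Q) - (w.1 • P + w.2 • Q) := by simp only [sub_zsmul]; abel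
      _ = 0 := sub_eq_zero.2 hvw
  have hdvd (k : ℕ) := pow_two_dvd_of_zsmul_add_zsmul_eq_zero φ hH hG hP hQ hPQ k h
  exact Prod.ext (sub_eq_zero.1 (hzero _ fun k => (hdvd k).1))
    (sub_eq_zero.1 (hzero _ fun k => (hdvd k).2))

end ZSMulAddZSMul

theorem Polynomial.ratCast_sub_ne_zero {K : Type*} [Field K] [CharZero K] {f : ℤ[X]}
    (hf : ∀ x : ℚ, aeval x f ≠ 0) {t : K} (ht : aeval t f = 0) (x : ℚ) : (x : K) - t ≠ 0 := by
  intro h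
  rw [← sub_eq_zero.1 h, ← eq_ratCast (algebraMap ℚ K), aeval_algebraMap_apply] at ht
  exact hf x ((algebraMap ℚ K).injective (ht.trans (map_zero _).symm))

namespace PadicInt

variable {p : ℕ} [Fact p.Prime]

@[simp, norm_cast]
theorem coe_ofNat (n : ℕ) [n.AtLeastTwo] : ((ofNat(n) : ℤ_[p]) : ℚ_[p]) = ofNat(n) := rfl

theorem aeval_coe (f : ℤ[X]) (z : ℤ_[p]) : aeval (z : ℚ_[p]) f = aeval z f :=
  aeval_algHom_apply Coe.ringHom.toIntAlgHom z f

theorem toZMod_eq_toZMod_iff_norm_sub_lt_one {x y : ℤ_[p]} :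
    toZMod x = toZMod y ↔ ‖x - y‖ < 1 := by
  rw [← sub_eq_zero, ← map_sub, ← RingHom.mem_ker, ker_toZMod, IsLocalRing.mem_maximalIdeal,
    mem_nonunits]

theorem exists_aeval_eq_zero_toZMod_eq (f : ℤ[X]) (a : ℤ) (hf : (p : ℤ) ∣ f.eval a)
    (hf' : ¬ (p : ℤ) ∣ f.derivative.eval a) :
    ∃ z : ℤ_[p], aeval z f = 0 ∧ toZMod z = a := by
  have haeval (g : ℤ[X]) : aeval (a : ℤ_[p]) g = ((g.eval a : ℤ) : ℤ_[p]) := by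
    rw [← eq_intCast (algebraMap ℤ ℤ_[p]), aeval_algebraMap_apply, coe_aeval_eq_eval, eq_intCast]
  have hderiv : ‖aeval (a : ℤ_[p]) (derivative f)‖ = 1 := by
    rw [haeval]
    exact le_antisymm (norm_le_one _) (not_lt.1 (mt (norm_int_lt_one_iff_dvd _).1 hf'))
  have hnorm : ‖aeval (a : ℤ_[p]) f‖ < ‖aeval (a : ℤ_[p]) (derivative f)‖ ^ 2 := by
    rw [hderiv, one_pow, haeval]
    exact (norm_int_lt_one_iff_dvd _).2 hf
  obtain ⟨z, hz, hza, -⟩ := hensels_lemma hnorm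
  rw [hderiv, ← toZMod_eq_toZMod_iff_norm_sub_lt_one, map_intCast] at hza
  exact ⟨z, hz, hza⟩

theorem not_isSquare_coe {c : ℤ_[p]} (hc : ¬ IsSquare (toZMod c)) : ¬ IsSquare (c : ℚ_[p]) := by
  rintro ⟨t, ht⟩
  have ht1 : ‖t‖ ≤ 1 := by
    have : ‖t‖ * ‖t‖ ≤ 1 := by
      rw [← norm_mul, ← ht, padic_norm_e_of_padicInt]
      exact norm_le_one c
    nlinarith [norm_nonneg t]
  let t' : ℤ_[p] := ⟨t, ht1⟩
  exact hc ⟨toZMod t', by rw [← map_mul]; exact congrArg toZMod (Subtype.ext ht)⟩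

end PadicInt

namespace WeierstrassCurve.Affine

variable {F A : Type*} [Field F] [CommRing A] [Algebra F A] {W : WeierstrassCurve.Affine F}
  {θ : A}

theorem Point.eq_zero_of_add_self_eq_zero [DecidableEq F]
    (hW : ∀ x y, W.Equation x y → y ≠ W.negY x y) {P : W.Point} (hP : P + P = 0) : P = 0 := by
  cases P with
  | zero => rfl
  | some _ _ h =>
    rw [Point.add_of_Y_ne (hW _ _ h.1)] at hP
    exact absurd hP (Point.some_ne_zero _)

/- The line `Y = ℓ (X - x₁) + y₁` meets the curve exactly at `x₁`, `x₂` and `x₃ = addX x₁ x₂ ℓ`,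
so `f(X) - (ℓ (X - x₁) + y₁)² = (X - x₁)(X - x₂)(X - x₃)`; evaluate at the root `θ` of `f`. -/
theorem sub_mul_sub_mul_addX_sub_eq_sq [DecidableEq F] (ha₁ : W.a₁ = 0) (ha₃ : W.a₃ = 0)
    (hroot : θ ^ 3 + algebraMap F A W.a₂ * θ ^ 2 + algebraMap F A W.a₄ * θ +
      algebraMap F A W.a₆ = 0)
    {x₁ x₂ y₁ y₂ : F} (h₁ : W.Equation x₁ y₁) (h₂ : W.Equation x₂ y₂)
    (hxy : ¬(x₁ = x₂ ∧ y₁ = W.negY x₂ y₂)) :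
    (algebraMap F A x₁ - θ) * (algebraMap F A x₂ - θ) *
        (algebraMap F A (W.addX x₁ x₂ (W.slope x₁ x₂ y₁ y₂)) - θ) =
      (algebraMap F A (W.slope x₁ x₂ y₁ y₂) * (θ - algebraMap F A x₁) +
        algebraMap F A y₁) ^ 2 := by
  have h := congrArg (aeval θ) (addPolynomial_slope h₁ h₂ hxy)
  simp only [addPolynomial, linePolynomial, polynomial, ha₁, ha₃, map_zero, zero_mul, add_zero,
    map_add, map_sub, map_pow, map_mul, map_neg, eval_sub, eval_pow, eval_X, eval_add, eval_C,
    eval_mul, aeval_C, aeval_X, addX] at h ⊢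
  linear_combination -h - hroot

section XSubRoot

variable (hunit : ∀ x : F, IsUnit (algebraMap F A x - θ))

noncomputable def xSubRootClass : W.Point → Aˣ ⧸ Subgroup.square Aˣ
  | 0 => 1
  | @Point.some _ _ _ x _ _ => (hunit x).unit

theorem xSubRootClass_some {x y : F} (h : W.Nonsingular x y) :
    xSubRootClass hunit (.some _ _ h) = (hunit x).unit := rfl

theorem xSubRootClass_some_eq_one_iff {x y : F} (h : W.Nonsingular x y) :
    xSubRootClass hunit (.some _ _ h) = 1 ↔ IsSquare (algebraMap F A x - θ) := by
  rw [xSubRootClass_some, QuotientGroup.mk_eq_one_iff_isSquare, ← Units.isSquare_val_iff,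
    IsUnit.unit_spec]

theorem xSubRootClass_add [DecidableEq F] (ha₁ : W.a₁ = 0) (ha₃ : W.a₃ = 0)
    (hroot : θ ^ 3 + algebraMap F A W.a₂ * θ ^ 2 + algebraMap F A W.a₄ * θ +
      algebraMap F A W.a₆ = 0) (P Q : W.Point) :
    xSubRootClass hunit (P + Q) = xSubRootClass hunit P * xSubRootClass hunit Q := by
  rcases P with _ | @⟨x₁, y₁, h₁⟩ <;> rcases Q with _ | @⟨x₂, y₂, h₂⟩
  · exact (one_mul 1).symm
  · exact (one_mul _).symm
  · exact (mul_one _).symm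
  by_cases hxy : x₁ = x₂ ∧ y₁ = W.negY x₂ y₂
  · rw [Point.add_of_Y_eq hxy.1 hxy.2]
    obtain ⟨rfl, -⟩ := hxy
    exact (QuotientGroup.mul_self_eq_one_of_square _).symm
  rw [Point.add_some hxy, xSubRootClass_some, xSubRootClass_some, xSubRootClass_some]
  refine QuotientGroup.mk_eq_mk_mul_mk_of_isSquare ?_
  rw [← Units.isSquare_val_iff, Units.val_mul, Units.val_mul, IsUnit.unit_spec, IsUnit.unit_spec,
    IsUnit.unit_spec, sub_mul_sub_mul_addX_sub_eq_sq ha₁ ha₃ hroot h₁.1 h₂.1 hxy]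
  exact IsSquare.sq _

noncomputable def xSubRootHom [DecidableEq F] (ha₁ : W.a₁ = 0) (ha₃ : W.a₃ = 0)
    (hroot : θ ^ 3 + algebraMap F A W.a₂ * θ ^ 2 + algebraMap F A W.a₄ * θ +
      algebraMap F A W.a₆ = 0) :
    W.Point →+ Additive (Aˣ ⧸ Subgroup.square Aˣ) :=
  AddMonoidHom.mk' (fun P => .ofMul (xSubRootClass hunit P)) fun P Q => by
    rw [xSubRootClass_add hunit ha₁ ha₃ hroot]
    rfl

variable [DecidableEq F] (ha₁ : W.a₁ = 0) (ha₃ : W.a₃ = 0)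
  (hroot : θ ^ 3 + algebraMap F A W.a₂ * θ ^ 2 + algebraMap F A W.a₄ * θ +
    algebraMap F A W.a₆ = 0)

theorem xSubRootHom_some_eq_zero_iff {x y : F} (h : W.Nonsingular x y) :
    xSubRootHom hunit ha₁ ha₃ hroot (.some _ _ h) = 0 ↔ IsSquare (algebraMap F A x - θ) :=
  xSubRootClass_some_eq_one_iff hunit h

theorem xSubRootHom_some_add_some_eq_zero_iff {x₁ y₁ x₂ y₂ : F} (h₁ : W.Nonsingular x₁ y₁)
    (h₂ : W.Nonsingular x₂ y₂) :
    xSubRootHom hunit ha₁ ha₃ hroot (.some _ _ h₁) +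
        xSubRootHom hunit ha₁ ha₃ hroot (.some _ _ h₂) = 0 ↔
      IsSquare ((algebraMap F A x₁ - θ) * (algebraMap F A x₂ - θ)) := by
  change Additive.ofMul
    (((hunit x₁).unit * (hunit x₂).unit : Aˣ) : Aˣ ⧸ Subgroup.square Aˣ) = 0 ↔ _
  rw [ofMul_eq_zero, QuotientGroup.mk_eq_one_iff_isSquare, ← Units.isSquare_val_iff,
    Units.val_mul, IsUnit.unit_spec, IsUnit.unit_spec]

end XSubRoot

end WeierstrassCurve.Affine

namespace E₂

open WeierstrassCurve.Affine PadicInt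

abbrev curve : WeierstrassCurve.Affine ℚ :=
  { a₁ := 0, a₂ := -44, a₃ := 0, a₄ := 84, a₆ := 8 }

noncomputable def cubic : ℤ[X] := X ^ 3 - 44 * X ^ 2 + 84 * X + 8

theorem aeval_cubic {R : Type*} [CommRing R] (t : R) :
    aeval t cubic = t ^ 3 - 44 * t ^ 2 + 84 * t + 8 := by
  simp [cubic, map_ofNat]

theorem cubic_monic : cubic.Monic := by
  unfold cubic
  monicity!

theorem aeval_cubic_ne_zero (x : ℚ) : aeval x cubic ≠ 0 := by
  intro hx
  obtain ⟨n, rfl, hn⟩ := exists_integer_of_is_root_of_monic cubic_monic hx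
  rw [aeval_algebraMap_apply, aeval_cubic, algebraMap_int_eq, eq_intCast] at hx
  have hn8 : n ∣ 8 := by simpa [cubic] using hn
  have hroot : n ^ 3 - 44 * n ^ 2 + 84 * n + 8 = 0 := by exact_mod_cast hx
  have := Int.le_of_dvd (by norm_num) hn8
  have := neg_le.1 (Int.le_of_dvd (by norm_num) (neg_dvd.2 hn8))
  interval_cases n <;> omega

theorem equation_iff (x y : ℚ) : curve.Equation x y ↔ y ^ 2 = aeval x cubic := by
  rw [WeierstrassCurve.Affine.equation_iff, aeval_cubic]
  ring_nf

theorem Δ_ne_zero : curve.Δ ≠ 0 := by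
  simp only [WeierstrassCurve.Δ, WeierstrassCurve.b₂, WeierstrassCurve.b₄, WeierstrassCurve.b₆,
    WeierstrassCurve.b₈]
  norm_num

theorem y_ne_negY (x y : ℚ) (h : curve.Equation x y) : y ≠ curve.negY x y := by
  intro hy
  have hy0 : y = 0 := by simp only [negY, sub_zero] at hy; linarith
  exact aeval_cubic_ne_zero x (by rw [← (equation_iff x y).1 h, hy0]; ring)

theorem weierstrass_cubic_eq_aeval {R : Type*} [CommRing R] [Algebra ℚ R] (θ : R) :
    θ ^ 3 + algebraMap ℚ R curve.a₂ * θ ^ 2 + algebraMap ℚ R curve.a₄ * θ +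
      algebraMap ℚ R curve.a₆ = aeval θ cubic := by
  simp [aeval_cubic, sub_eq_add_neg, map_ofNat (algebraMap ℚ R)]

section Prod

variable {K L : Type*} [Field K] [CharZero K] [Field L] [CharZero L] {t : K} {s : L}

theorem weierstrass_cubic_prod_eq_zero (ht : aeval t cubic = 0) (hs : aeval s cubic = 0) :
    ((t, s) : K × L) ^ 3 + algebraMap ℚ (K × L) curve.a₂ * (t, s) ^ 2 +
      algebraMap ℚ (K × L) curve.a₄ * (t, s) + algebraMap ℚ (K × L) curve.a₆ = 0 := by
  rw [← weierstrass_cubic_eq_aeval] at ht hs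
  exact Prod.ext (by simpa using ht) (by simpa using hs)

theorem isUnit_algebraMap_sub_prod (ht : aeval t cubic = 0) (hs : aeval s cubic = 0) (x : ℚ) :
    IsUnit (algebraMap ℚ (K × L) x - (t, s)) :=
  Prod.isUnit_iff.2
    ⟨by simpa using (ratCast_sub_ne_zero aeval_cubic_ne_zero ht x).isUnit,
      by simpa using (ratCast_sub_ne_zero aeval_cubic_ne_zero hs x).isUnit⟩

end Prod

instance : Fact (Nat.Prime 11) := ⟨by norm_num⟩

instance : Fact (Nat.Prime 19) := ⟨by norm_num⟩

theorem exists_root_padicInt_eleven : ∃ z : ℤ_[11], aeval z cubic = 0 ∧ toZMod z = 10 :=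
  exists_aeval_eq_zero_toZMod_eq cubic 10 (by simp [cubic]) (by simp [cubic])

theorem exists_root_padicInt_nineteen : ∃ z : ℤ_[19], aeval z cubic = 0 ∧ toZMod z = 9 :=
  exists_aeval_eq_zero_toZMod_eq cubic 9 (by simp [cubic]) (by simp [cubic])

theorem not_isSquare_one_sub {z : ℤ_[11]} (hz : toZMod z = 10) :
    ¬ IsSquare (1 - (z : ℚ_[11])) := by
  have := not_isSquare_coe (c := 1 - z) (by rw [map_sub, map_one, hz]; decide)
  push_cast at this
  exact this

theorem not_isSquare_quarter_sub {z : ℤ_[19]} (hz : toZMod z = 9) :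
    ¬ IsSquare (1 / 4 - (z : ℚ_[19])) := by
  intro h
  refine not_isSquare_coe (c := 1 - 4 * z)
    (by rw [map_sub, map_one, map_mul, map_ofNat, hz]; decide) ?_
  have h4 := (IsSquare.mul_self (2 : ℚ_[19])).mul h
  rwa [show (2 : ℚ_[19]) * 2 * (1 / 4 - z) = ((1 - 4 * z : ℤ_[19]) : ℚ_[19]) by push_cast; ring]
    at h4

theorem not_isSquare_one_sub_mul_quarter_sub {z : ℤ_[11]} (hz : toZMod z = 10) :
    ¬ IsSquare ((1 - (z : ℚ_[11])) * (1 / 4 - z)) := by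
  intro h
  refine not_isSquare_coe (c := (1 - z) * (1 - 4 * z))
    (by rw [map_mul, map_sub, map_one, map_sub, map_one, map_mul, map_ofNat, hz]; decide) ?_
  have h4 := (IsSquare.mul_self (2 : ℚ_[11])).mul h
  rwa [show (2 : ℚ_[11]) * 2 * ((1 - z) * (1 / 4 - z)) =
      (((1 - z) * (1 - 4 * z) : ℤ_[11]) : ℚ_[11]) by push_cast; ring] at h4

end E₂

open WeierstrassCurve.Affine E₂ PadicInt

/-- The points `(1/2, 7/4)` and `(1/8, 41/32)` lie on the twisted curve
`E₂ : 2y² = x³ − 22x² + 21x + 1` over `ℚ`, and generate a free subgroup of rank `2` of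
`E₂(ℚ)`; in particular `rk E₂(ℚ) ≥ 2`. Here `E₂(ℚ)` is computed on the Weierstrass model
`Y² = X³ − 44X² + 84X + 8` of `E₂`, on which a point `(x, y)` of `E₂` corresponds to
`(2x, 4y)`. -/
theorem stmt_15 (W : WeierstrassCurve.Affine ℚ)
    (hW : W = { a₁ := 0, a₂ := -44, a₃ := 0, a₄ := 84, a₆ := 8 }) :
    2 * (7 / 4 : ℚ) ^ 2 = (1 / 2) ^ 3 - 22 * (1 / 2) ^ 2 + 21 * (1 / 2) + 1 ∧
    2 * (41 / 32 : ℚ) ^ 2 = (1 / 8) ^ 3 - 22 * (1 / 8) ^ 2 + 21 * (1 / 8) + 1 ∧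
    W.Equation (2 * (1 / 2)) (4 * (7 / 4)) ∧ W.Equation (2 * (1 / 8)) (4 * (41 / 32)) ∧
      ∃ (h₁ : W.Nonsingular (2 * (1 / 2)) (4 * (7 / 4)))
        (h₂ : W.Nonsingular (2 * (1 / 8)) (4 * (41 / 32))),
        Function.Injective (fun v : ℤ × ℤ =>
          v.1 • (WeierstrassCurve.Affine.Point.some _ _ h₁ : W.Point) +
            v.2 • (WeierstrassCurve.Affine.Point.some _ _ h₂ : W.Point)) := by
  subst hW
  have hE₁ : curve.Equation (2 * (1 / 2)) (4 * (7 / 4)) := by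
    rw [E₂.equation_iff, aeval_cubic]; norm_num
  have hE₂ : curve.Equation (2 * (1 / 8)) (4 * (41 / 32)) := by
    rw [E₂.equation_iff, aeval_cubic]; norm_num
  have h₁ := (equation_iff_nonsingular_of_Δ_ne_zero Δ_ne_zero).1 hE₁
  have h₂ := (equation_iff_nonsingular_of_Δ_ne_zero Δ_ne_zero).1 hE₂
  refine ⟨by norm_num, by norm_num, hE₁, hE₂, h₁, h₂, ?_⟩
  obtain ⟨z₁, hz₁, hz₁'⟩ := exists_root_padicInt_eleven
  obtain ⟨z₂, hz₂, hz₂'⟩ := exists_root_padicInt_nineteen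
  replace hz₁ : aeval (z₁ : ℚ_[11]) cubic = 0 := by rw [aeval_coe, hz₁, PadicInt.coe_zero]
  replace hz₂ : aeval (z₂ : ℚ_[19]) cubic = 0 := by rw [aeval_coe, hz₂, PadicInt.coe_zero]
  refine injective_zsmul_add_zsmul (xSubRootHom (isUnit_algebraMap_sub_prod hz₁ hz₂) rfl rfl
      (weierstrass_cubic_prod_eq_zero hz₁ hz₂))
    (fun q => QuotientGroup.mul_self_eq_one_of_square q.toMul)
    (fun _ => Point.eq_zero_of_add_self_eq_zero y_ne_negY) ?_ ?_ ?_
  · rw [Ne, xSubRootHom_some_eq_zero_iff]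
    refine Prod.not_isSquare_of_not_isSquare_fst ?_
    norm_num [Prod.algebraMap_apply]
    exact not_isSquare_one_sub hz₁'
  · rw [Ne, xSubRootHom_some_eq_zero_iff]
    refine Prod.not_isSquare_of_not_isSquare_snd ?_
    norm_num [Prod.algebraMap_apply]
    exact not_isSquare_quarter_sub hz₂'
  · rw [Ne, xSubRootHom_some_add_some_eq_zero_iff]
    refine Prod.not_isSquare_of_not_isSquare_fst ?_
    norm_num [Prod.algebraMap_apply]
    exact not_isSquare_one_sub_mul_quarter_sub hz₁'
end
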